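/- arXiv:1909.04896 — 3 statements merged into one kernel-verified Lean document; each statement's English description precedes it below -/
import Mathlib

section
/- Let X be a complete separable metric space with its Borel σ-algebra, μ a Borel probability measure on X, f : X → X a Borel-measurable map, 𝒜₀ a countable algebra of Borel sets generating the Borel σ-algebra, and ℙ_f the dynamical partition of X with respect to f and 𝒜₀. Suppose μ is f-invariant, i.e. μ(f⁻¹(A)) = μ(A) for every Borel set A. If {μ_P : P ∈ ℙ_f} is a disintegration of μ with respect to ℙ_f, then for μ̂-almost every P ∈ ℙ_f the conditional measure μ_P is f-invariant. -/
open MeasureTheory Filter Set Topology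

namespace ErgodicDecomposition

variable {X : Type*}

/-- `ℙ` is a partition of `X`: every point lies in exactly one element of `ℙ`. -/
def IsPartition (ℙ : Set (Set X)) : Prop := ∀ x : X, ∃! P, P ∈ ℙ ∧ x ∈ P

open Classical in
/-- The element of `ℙ` containing `x` (with junk value `∅` if there is none);
this is the canonical projection `τ̂ : X → ℙ`. -/
noncomputable def partOf (ℙ : Set (Set X)) (x : X) : Set X :=
  if h : ∃ P, P ∈ ℙ ∧ x ∈ P then h.choose else ∅

/-- `ν` is a disintegration of `μ` with respect to the partition `ℙ`.  All statements about
the quotient space `ℙ` (its σ-algebra, the quotient measure `μ̂`, measurability of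
`P ↦ μ_P(E)` and integration against `μ̂`) are expressed, equivalently, after pulling back
along the canonical projection `x ↦ partOf ℙ x`, since the σ-algebra of `ℙ` is by definition
the pushforward σ-algebra and `μ̂` is the pushforward measure. -/
def IsDisintegration [MeasurableSpace X] (μ : Measure X) (ℙ : Set (Set X))
    (ν : Set X → Measure X) : Prop :=
  (∀ P ∈ ℙ, IsProbabilityMeasure (ν P)) ∧
  (∀ᵐ x ∂μ, ν (partOf ℙ x) (partOf ℙ x) = 1) ∧
  (∀ E : Set X, MeasurableSet E →
    Measurable (fun x => ν (partOf ℙ x) E) ∧ μ E = ∫⁻ x, ν (partOf ℙ x) E ∂μ)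

/-- `ℙ` is a measurable partition for `μ`: a partition of `X` into measurable sets such that
there are a full measure set `X₀` and a refining sequence of countable partitions `Ps n` into
measurable sets with `P(x) = ⋂ n, P_n(x)` for every `x ∈ X₀`. -/
def IsMeasurablePartition [MeasurableSpace X] (μ : Measure X) (ℙ : Set (Set X)) : Prop :=
  IsPartition ℙ ∧ (∀ P ∈ ℙ, MeasurableSet P) ∧
  ∃ X₀ : Set X, MeasurableSet X₀ ∧ μ X₀ = 1 ∧
  ∃ Ps : ℕ → Set (Set X),
    (∀ n, (Ps n).Countable) ∧
    (∀ n, IsPartition (Ps n)) ∧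
    (∀ n, ∀ P ∈ Ps n, MeasurableSet P) ∧
    (∀ n, ∀ B ∈ Ps (n + 1), ∃ A ∈ Ps n, B ⊆ A) ∧
    (∀ x ∈ X₀, partOf ℙ x = ⋂ n, partOf (Ps n) x)

open Classical in
/-- `τ(x, A)`: the lim-inf of the asymptotic frequency of visits of the orbit of `x` to `A`. -/
noncomputable def visitFreq (f : X → X) (A : Set X) (x : X) : ℝ :=
  atTop.liminf fun n : ℕ =>
    (((Finset.range n).filter fun i => f^[i] x ∈ A).card : ℝ) / n

/-- The equivalence class of `x` for the relation `x ∼ y ↔ τ(x,A) = τ(y,A)` for all `A ∈ 𝒜₀`. -/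
def dynClass (f : X → X) (𝒜₀ : Set (Set X)) (x : X) : Set X :=
  {y | ∀ A ∈ 𝒜₀, visitFreq f A y = visitFreq f A x}

/-- The dynamical partition of `X` with respect to `f` and the countable algebra `𝒜₀`. -/
def dynPartition (f : X → X) (𝒜₀ : Set (Set X)) : Set (Set X) :=
  {P | ∃ x : X, P = dynClass f 𝒜₀ x}


/-!
The visit frequencies `τ(·, A)` are constant along orbits, so `f` maps every element of `ℙ_f`
into itself, and every union `S` of elements of `ℙ_f` satisfies `f⁻¹ S = S`. For such `S`,
invariance of `μ` and the disintegration formula give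
`∫_S μ_P(f⁻¹ A) dμ = μ(f⁻¹ A ∩ S) = μ(A ∩ S) = ∫_S μ_P(A) dμ`.
Choosing `S = {μ_P(f⁻¹ A) < μ_P(A)}` (and symmetrically) shows `μ_P(f⁻¹ A) = μ_P(A)` almost
surely for each `A`, hence for all `A` in the countable algebra `𝒜₀` simultaneously, and then
for all Borel `A` by uniqueness of extension from a π-system.
-/

lemma liminf_add_of_tendsto_zero {ι : Type*} {l : Filter ι} [l.NeBot] {u w : ι → ℝ}
    (hu : IsBoundedUnder (· ≤ ·) l u) (hu' : IsBoundedUnder (· ≥ ·) l u)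
    (hw : Tendsto w l (𝓝 0)) :
    l.liminf (u + w) = l.liminf u := by
  apply le_antisymm
  · calc l.liminf (u + w) = l.liminf (w + u) := by rw [add_comm]
      _ ≤ l.limsup w + l.liminf u :=
        liminf_add_le hw.isBoundedUnder_ge hw.isBoundedUnder_le hu' hu.isCoboundedUnder_ge
      _ = l.liminf u := by rw [hw.limsup_eq, zero_add]
  · calc l.liminf u = l.liminf u + l.liminf w := by rw [hw.liminf_eq, add_zero]
      _ ≤ l.liminf (u + w) :=
        le_liminf_add hu' hu hw.isBoundedUnder_ge hw.isBoundedUnder_le.isCoboundedUnder_ge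

open Classical in
noncomputable def visitCount (f : X → X) (A : Set X) (n : ℕ) (x : X) : ℕ :=
  ((Finset.range n).filter fun i => f^[i] x ∈ A).card

lemma visitFreq_eq_liminf (f : X → X) (A : Set X) (x : X) :
    visitFreq f A x = atTop.liminf fun n : ℕ => (visitCount f A n x : ℝ) / n :=
  rfl

open Classical in
lemma visitCount_eq_sum (f : X → X) (A : Set X) (n : ℕ) (x : X) :
    visitCount f A n x = ∑ i ∈ Finset.range n, if f^[i] x ∈ A then 1 else 0 :=
  Finset.card_filter _ _

open Classical in
lemma visitCount_le (f : X → X) (A : Set X) (n : ℕ) (x : X) : visitCount f A n x ≤ n :=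
  (Finset.card_filter_le _ _).trans (Finset.card_range n).le

open Classical in
lemma visitCount_apply_add (f : X → X) (A : Set X) (n : ℕ) (x : X) :
    visitCount f A n (f x) + (if x ∈ A then 1 else 0)
      = visitCount f A n x + (if f^[n] x ∈ A then 1 else 0) := by
  simp only [visitCount_eq_sum, ← Function.iterate_succ_apply, ← Finset.sum_range_succ]
  exact (Finset.sum_range_succ' (fun i => if f^[i] x ∈ A then 1 else 0) n).symm

lemma abs_visitCount_apply_sub_le (f : X → X) (A : Set X) (n : ℕ) (x : X) :
    |(visitCount f A n (f x) : ℝ) - visitCount f A n x| ≤ 1 := by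
  classical
  have h := visitCount_apply_add f A n x
  rw [abs_le]
  constructor <;> split_ifs at h <;> push_cast [← Nat.cast_inj (R := ℝ)] at h <;> linarith

lemma visitFreq_apply (f : X → X) (A : Set X) (x : X) :
    visitFreq f A (f x) = visitFreq f A x := by
  set u : ℕ → ℝ := fun n => (visitCount f A n x : ℝ) / n
  set w : ℕ → ℝ := fun n => ((visitCount f A n (f x) : ℝ) - visitCount f A n x) / n
  have hu : ∀ n, u n ∈ Icc (0 : ℝ) 1 := fun n =>
    ⟨by positivity, div_le_one_of_le₀ (by exact_mod_cast visitCount_le f A n x) n.cast_nonneg⟩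
  have hw : Tendsto w atTop (𝓝 0) := by
    refine squeeze_zero_norm (fun n => ?_) tendsto_one_div_atTop_nhds_zero_nat
    rw [Real.norm_eq_abs, abs_div, Nat.abs_cast]
    exact div_le_div_of_nonneg_right (abs_visitCount_apply_sub_le f A n x) n.cast_nonneg
  have hsplit : (fun n : ℕ => (visitCount f A n (f x) : ℝ) / n) = u + w := by
    ext n
    simp only [u, w, Pi.add_apply]
    ring
  rw [visitFreq_eq_liminf, visitFreq_eq_liminf, hsplit]
  exact liminf_add_of_tendsto_zero (isBoundedUnder_of ⟨1, fun n => (hu n).2⟩)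
    (isBoundedUnder_of ⟨0, fun n => (hu n).1⟩) hw

namespace IsPartition

variable {ℙ : Set (Set X)}

lemma partOf_spec (hℙ : IsPartition ℙ) (x : X) :
    partOf ℙ x ∈ ℙ ∧ x ∈ partOf ℙ x := by
  have hex : ∃ P, P ∈ ℙ ∧ x ∈ P := (hℙ x).exists
  rw [partOf, dif_pos hex]
  exact hex.choose_spec

lemma partOf_eq_of_mem (hℙ : IsPartition ℙ) {P : Set X} {x : X} (hP : P ∈ ℙ) (hx : x ∈ P) :
    partOf ℙ x = P :=
  (hℙ x).unique (hℙ.partOf_spec x) ⟨hP, hx⟩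

lemma partOf_eq_of_mem_partOf (hℙ : IsPartition ℙ) {x y : X} (hy : y ∈ partOf ℙ x) :
    partOf ℙ y = partOf ℙ x :=
  hℙ.partOf_eq_of_mem (hℙ.partOf_spec x).1 hy

end IsPartition

lemma dynClass_eq_of_mem {f : X → X} {𝒜₀ : Set (Set X)} {x y : X}
    (h : y ∈ dynClass f 𝒜₀ x) : dynClass f 𝒜₀ y = dynClass f 𝒜₀ x := by
  ext z
  exact ⟨fun hz A hA => (hz A hA).trans (h A hA), fun hz A hA => (hz A hA).trans (h A hA).symm⟩

lemma isPartition_dynPartition (f : X → X) (𝒜₀ : Set (Set X)) :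
    IsPartition (dynPartition f 𝒜₀) := by
  intro x
  refine ⟨dynClass f 𝒜₀ x, ⟨⟨x, rfl⟩, fun _ _ => rfl⟩, ?_⟩
  rintro P ⟨⟨y, rfl⟩, hx⟩
  exact (dynClass_eq_of_mem hx).symm

lemma partOf_dynPartition_apply (f : X → X) (𝒜₀ : Set (Set X)) (x : X) :
    partOf (dynPartition f 𝒜₀) (f x) = partOf (dynPartition f 𝒜₀) x := by
  have hℙ := isPartition_dynPartition f 𝒜₀
  have hx : partOf (dynPartition f 𝒜₀) x = dynClass f 𝒜₀ x :=
    hℙ.partOf_eq_of_mem ⟨x, rfl⟩ fun _ _ => rfl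
  rw [hx]
  exact hℙ.partOf_eq_of_mem ⟨x, rfl⟩ fun A _ => visitFreq_apply f A x

lemma preimage_preimage_partOf_dynPartition (f : X → X) (𝒜₀ : Set (Set X)) (T : Set (Set X)) :
    f ⁻¹' (partOf (dynPartition f 𝒜₀) ⁻¹' T) = partOf (dynPartition f 𝒜₀) ⁻¹' T := by
  ext x
  simp only [mem_preimage, partOf_dynPartition_apply]

namespace IsDisintegration

variable [MeasurableSpace X] {μ : Measure X} {ℙ : Set (Set X)}
  {ν : Set X → Measure X}

lemma ae_measure_inter_preimage_partOf (hν : IsDisintegration μ ℙ ν) (hℙ : IsPartition ℙ)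
    (E : Set X) {T : Set (Set X)} (hS : MeasurableSet (partOf ℙ ⁻¹' T)) :
    ∀ᵐ x ∂μ, ν (partOf ℙ x) (E ∩ partOf ℙ ⁻¹' T)
      = (partOf ℙ ⁻¹' T).indicator (fun x => ν (partOf ℙ x) E) x := by
  filter_upwards [hν.2.1] with x hx
  have := hν.1 _ (hℙ.partOf_spec x).1
  have hsat : ∀ y ∈ partOf ℙ x, (y ∈ partOf ℙ ⁻¹' T ↔ x ∈ partOf ℙ ⁻¹' T) := fun y hy => by
    simp only [mem_preimage, hℙ.partOf_eq_of_mem_partOf hy]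
  by_cases hxS : x ∈ partOf ℙ ⁻¹' T
  · have hS1 : ν (partOf ℙ x) (partOf ℙ ⁻¹' T) = 1 :=
      le_antisymm prob_le_one (hx.symm.trans_le (measure_mono fun y hy => (hsat y hy).2 hxS))
    rw [indicator_of_mem hxS, measure_inter_conull ((prob_compl_eq_zero_iff hS).2 hS1)]
  · have hSc1 : ν (partOf ℙ x) (partOf ℙ ⁻¹' T)ᶜ = 1 :=
      le_antisymm prob_le_one
        (hx.symm.trans_le (measure_mono fun y hy hyS => hxS ((hsat y hy).1 hyS)))
    rw [indicator_of_notMem hxS]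
    exact measure_mono_null inter_subset_right ((prob_compl_eq_one_iff hS).1 hSc1)

lemma measure_inter_preimage_partOf (hν : IsDisintegration μ ℙ ν) (hℙ : IsPartition ℙ)
    {E : Set X} (hE : MeasurableSet E) {T : Set (Set X)}
    (hS : MeasurableSet (partOf ℙ ⁻¹' T)) :
    μ (E ∩ partOf ℙ ⁻¹' T) = ∫⁻ x in partOf ℙ ⁻¹' T, ν (partOf ℙ x) E ∂μ := by
  rw [(hν.2.2 _ (hE.inter hS)).2, ← lintegral_indicator hS]
  exact lintegral_congr_ae (hν.ae_measure_inter_preimage_partOf hℙ E hS)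

lemma ae_le_of_measure_inter_preimage_partOf_le [IsFiniteMeasure μ]
    (hν : IsDisintegration μ ℙ ν) (hℙ : IsPartition ℙ) {E E' : Set X}
    (hE : MeasurableSet E) (hE' : MeasurableSet E')
    (h : ∀ T : Set (Set X), MeasurableSet (partOf ℙ ⁻¹' T) →
      μ (E ∩ partOf ℙ ⁻¹' T) ≤ μ (E' ∩ partOf ℙ ⁻¹' T)) :
    ∀ᵐ x ∂μ, ν (partOf ℙ x) E ≤ ν (partOf ℙ x) E' := by
  set T : Set (Set X) := {P | ν P E' < ν P E}
  have hS : MeasurableSet (partOf ℙ ⁻¹' T) :=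
    measurableSet_lt (hν.2.2 E' hE').1 (hν.2.2 E hE).1
  rw [ae_iff]
  simp_rw [not_le]
  by_contra hS0
  have hlt := setLIntegral_strict_mono hS hS0 (hν.2.2 E hE).1
    (by rw [← hν.measure_inter_preimage_partOf hℙ hE' hS]; exact measure_ne_top _ _)
    (ae_of_all _ fun x hx => hx)
  rw [← hν.measure_inter_preimage_partOf hℙ hE' hS,
    ← hν.measure_inter_preimage_partOf hℙ hE hS] at hlt
  exact (h T hS).not_gt hlt

lemma ae_eq_of_measure_inter_preimage_partOf_eq [IsFiniteMeasure μ]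
    (hν : IsDisintegration μ ℙ ν) (hℙ : IsPartition ℙ) {E E' : Set X}
    (hE : MeasurableSet E) (hE' : MeasurableSet E')
    (h : ∀ T : Set (Set X), MeasurableSet (partOf ℙ ⁻¹' T) →
      μ (E ∩ partOf ℙ ⁻¹' T) = μ (E' ∩ partOf ℙ ⁻¹' T)) :
    ∀ᵐ x ∂μ, ν (partOf ℙ x) E = ν (partOf ℙ x) E' := by
  filter_upwards [hν.ae_le_of_measure_inter_preimage_partOf_le hℙ hE hE' fun T hS => (h T hS).le,
    hν.ae_le_of_measure_inter_preimage_partOf_le hℙ hE' hE fun T hS => (h T hS).ge] with x h₁ h₂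
  exact le_antisymm h₁ h₂

end IsDisintegration

lemma Measure.map_eq_self_of_generateFrom [m : MeasurableSpace X] {ν : Measure X}
    [IsFiniteMeasure ν] {f : X → X} (hf : Measurable f) {C : Set (Set X)}
    (hgen : MeasurableSpace.generateFrom C = m) (hC : IsPiSystem C)
    (h : ∀ A ∈ C, ν (f ⁻¹' A) = ν A) :
    ν.map f = ν := by
  have hmeas : ∀ A ∈ C, MeasurableSet A := fun A hA =>
    hgen ▸ MeasurableSpace.measurableSet_generateFrom hA
  refine (ext_of_generate_finite C hgen.symm hC (fun A hA => ?_) ?_).symm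
  · rw [Measure.map_apply hf (hmeas A hA), h A hA]
  · rw [Measure.map_apply hf MeasurableSet.univ, preimage_univ]

theorem ae_conditional_invariant_general {X : Type*} [MeasurableSpace X]
    (μ : Measure X) [IsProbabilityMeasure μ]
    (f : X → X) (hf : Measurable f)
    (𝒜₀ : Set (Set X)) (hcount : 𝒜₀.Countable)
    (halg : MeasureTheory.IsSetAlgebra 𝒜₀)
    (hgen : MeasurableSpace.generateFrom 𝒜₀ = ‹MeasurableSpace X›)
    (hinv : ∀ A : Set X, MeasurableSet A → μ (f ⁻¹' A) = μ A)
    (ν : Set X → Measure X)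
    (hν : IsDisintegration μ (dynPartition f 𝒜₀) ν) :
    ∀ᵐ x ∂μ, ∀ A : Set X, MeasurableSet A →
      ν (partOf (dynPartition f 𝒜₀) x) (f ⁻¹' A) = ν (partOf (dynPartition f 𝒜₀) x) A := by
  have hℙ := isPartition_dynPartition f 𝒜₀
  have hgenerator : ∀ A ∈ 𝒜₀, ∀ᵐ x ∂μ,
      ν (partOf (dynPartition f 𝒜₀) x) (f ⁻¹' A) = ν (partOf (dynPartition f 𝒜₀) x) A := by
    intro A hA
    have hA' : MeasurableSet A := hgen ▸ MeasurableSpace.measurableSet_generateFrom hA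
    refine hν.ae_eq_of_measure_inter_preimage_partOf_eq hℙ (hf hA') hA' fun T hS => ?_
    rw [← hinv _ (hA'.inter hS), preimage_inter, preimage_preimage_partOf_dynPartition]
  filter_upwards [(ae_ball_iff hcount).2 hgenerator] with x hx A hA
  have := hν.1 _ (hℙ.partOf_spec x).1
  rw [← Measure.map_apply hf hA, Measure.map_eq_self_of_generateFrom hf hgen
    halg.isSetRing.isSetSemiring.isPiSystem hx]

/-- if `μ` is `f`-invariant, then for a disintegration of `μ` with respect to the
dynamical partition almost every conditional measure is `f`-invariant. -/
theorem ae_conditional_invariant {X : Type*} [MetricSpace X] [CompleteSpace X]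
    [TopologicalSpace.SeparableSpace X] [MeasurableSpace X] [BorelSpace X]
    (μ : Measure X) [IsProbabilityMeasure μ]
    (f : X → X) (hf : Measurable f)
    (𝒜₀ : Set (Set X)) (hcount : 𝒜₀.Countable)
    (halg : MeasureTheory.IsSetAlgebra 𝒜₀)
    (hgen : MeasurableSpace.generateFrom 𝒜₀ = ‹MeasurableSpace X›)
    (hinv : ∀ A : Set X, MeasurableSet A → μ (f ⁻¹' A) = μ A)
    (ν : Set X → Measure X)
    (hν : IsDisintegration μ (dynPartition f 𝒜₀) ν) :
    ∀ᵐ x ∂μ, ∀ A : Set X, MeasurableSet A →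
      ν (partOf (dynPartition f 𝒜₀) x) (f ⁻¹' A) = ν (partOf (dynPartition f 𝒜₀) x) A :=
  ae_conditional_invariant_general μ f hf 𝒜₀ hcount halg hgen hinv ν hν

end ErgodicDecomposition
end

section
/- Let X be a separable metric space with its Borel σ-algebra, μ a Borel probability measure on X, and f : X → X a Borel-measurable bijection with Borel-measurable inverse such that μ is ergodic for f (every Borel set E with f⁻¹(E) = E has μ(E) ∈ {0,1}). Let ℙ = {O(x) : x ∈ X} be the partition of X into full orbits O(x) = {f^n(x) : n ∈ ℤ}. Then ℙ is a measurable partition for μ if and only if there exists x ∈ X whose orbit O(x) has μ(O(x)) = 1. -/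
open MeasureTheory Filter Set Topology

namespace ErgodicDecomposition

variable {X : Type*}

/-- The full orbit `O(x) = {fⁿ(x) : n ∈ ℤ}` of a point under a bimeasurable bijection. -/
def fullOrbit {X : Type*} (f : X ≃ X) (x : X) : Set X :=
  Set.range fun n : ℤ => (f ^ n) x

/-!
If the orbit partition is measurable, refine it by countable measurable partitions `ℙₙ`.
For each `n`, almost every orbit lies in a single element of `ℙₙ`, and the set of points whose
whole orbit lies in a fixed element `P` is a measurable `f`-invariant subset of `P`; by
ergodicity and countability of `ℙₙ` one such set has full measure. Intersecting over `n`,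
almost every point lies in `⋂ₙ Pₙ`, which is the orbit of any of its points in `X₀`.
Conversely, an orbit of full measure together with its complement is already a measurable
partition agreeing with the orbit partition on that orbit.
-/

section Partition

lemma partOf_eq {ℙ : Set (Set X)} (h : IsPartition ℙ) {P : Set X} {x : X}
    (hP : P ∈ ℙ) (hx : x ∈ P) : partOf ℙ x = P := by
  have he : ∃ Q, Q ∈ ℙ ∧ x ∈ Q := ⟨P, hP, hx⟩
  rw [partOf, dif_pos he]
  exact (h x).unique he.choose_spec ⟨hP, hx⟩

lemma partOf_mem {ℙ : Set (Set X)} (h : IsPartition ℙ) (x : X) :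
    partOf ℙ x ∈ ℙ ∧ x ∈ partOf ℙ x := by
  obtain ⟨P, hP, -⟩ := h x
  rw [partOf_eq h hP.1 hP.2]
  exact hP

lemma isPartition_pair_compl (A : Set X) : IsPartition ({A, Aᶜ} : Set (Set X)) := by
  intro x
  by_cases hx : x ∈ A
  · refine ⟨A, ⟨mem_insert _ _, hx⟩, ?_⟩
    rintro P ⟨rfl | rfl, hxP⟩
    · rfl
    · exact absurd hx hxP
  · refine ⟨Aᶜ, ⟨mem_insert_of_mem _ rfl, hx⟩, ?_⟩
    rintro P ⟨rfl | rfl, hxP⟩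
    · exact absurd hxP hx
    · rfl

/-- The constant refining sequence `{P, Pᶜ}` witnesses measurability. -/
lemma isMeasurablePartition_of_measure_eq_one [MeasurableSpace X] {μ : Measure X}
    {ℙ : Set (Set X)} (hℙ : IsPartition ℙ) (hmeas : ∀ P ∈ ℙ, MeasurableSet P)
    {P : Set X} (hP : P ∈ ℙ) (hμP : μ P = 1) : IsMeasurablePartition μ ℙ := by
  have hPm := hmeas P hP
  refine ⟨hℙ, hmeas, P, hPm, hμP, fun _ => {P, Pᶜ}, fun _ => (countable_singleton _).insert _,
    fun _ => isPartition_pair_compl P, ?_, fun _ B hB => ⟨B, hB, subset_rfl⟩, ?_⟩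
  · rintro - Q (rfl | rfl)
    exacts [hPm, hPm.compl]
  · intro x hx
    rw [partOf_eq hℙ hP hx]
    simp only [partOf_eq (isPartition_pair_compl P) (mem_insert _ _) hx, iInter_const]

end Partition

section Orbit

variable (f : X ≃ X)

lemma mem_fullOrbit_self (x : X) : x ∈ fullOrbit f x :=
  ⟨0, by simp⟩

variable {f} in
lemma fullOrbit_eq_of_mem {x y : X} (h : y ∈ fullOrbit f x) :
    fullOrbit f y = fullOrbit f x := by
  obtain ⟨n, rfl⟩ := h
  ext z
  constructor
  · rintro ⟨m, rfl⟩
    exact ⟨m + n, by simp only [zpow_add, Equiv.Perm.mul_apply]⟩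
  · rintro ⟨m, rfl⟩
    exact ⟨m - n, by simp only [← Equiv.Perm.mul_apply, ← zpow_add, sub_add_cancel]⟩

lemma fullOrbit_apply (x : X) : fullOrbit f (f x) = fullOrbit f x :=
  fullOrbit_eq_of_mem ⟨1, by simp⟩

lemma isPartition_fullOrbits : IsPartition {P | ∃ x : X, P = fullOrbit f x} := by
  intro x
  refine ⟨fullOrbit f x, ⟨⟨x, rfl⟩, mem_fullOrbit_self f x⟩, ?_⟩
  rintro P ⟨⟨y, rfl⟩, hx⟩
  exact (fullOrbit_eq_of_mem hx).symm

lemma partOf_fullOrbits (x : X) :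
    partOf {P | ∃ x : X, P = fullOrbit f x} x = fullOrbit f x :=
  partOf_eq (isPartition_fullOrbits f) ⟨x, rfl⟩ (mem_fullOrbit_self f x)

lemma measurableSet_fullOrbit [MeasurableSpace X] [MeasurableSingletonClass X] (x : X) :
    MeasurableSet (fullOrbit f x) :=
  (countable_range _).measurableSet

/-- The points whose whole orbit lies in `P`: the largest `f`-invariant subset of `P`. -/
def orbitCore (P : Set X) : Set X := {x | fullOrbit f x ⊆ P}

lemma preimage_orbitCore (P : Set X) : f ⁻¹' orbitCore f P = orbitCore f P := by
  ext x
  change fullOrbit f (f x) ⊆ P ↔ fullOrbit f x ⊆ P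
  rw [fullOrbit_apply]

lemma orbitCore_eq_iInter (P : Set X) : orbitCore f P = ⋂ k : ℤ, ⇑(f ^ k) ⁻¹' P := by
  ext x
  change range _ ⊆ P ↔ _
  simp only [range_subset_iff, mem_iInter, mem_preimage]

variable [MeasurableSpace X] {f}

lemma measurable_zpow (hf : Measurable f) (hfsymm : Measurable f.symm) (k : ℤ) :
    Measurable ⇑(f ^ k) := by
  induction k using Int.induction_on with
  | zero => simpa using measurable_id
  | succ n ih =>
    rw [zpow_add_one]
    exact ih.comp hf
  | pred n ih =>
    rw [zpow_sub_one]
    exact ih.comp hfsymm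

lemma measurableSet_orbitCore (hf : Measurable f) (hfsymm : Measurable f.symm) {P : Set X}
    (hP : MeasurableSet P) : MeasurableSet (orbitCore f P) := by
  rw [orbitCore_eq_iInter]
  exact .iInter fun k => measurable_zpow hf hfsymm k hP

end Orbit

section Ergodic

variable [MeasurableSpace X] {μ : Measure X} [IsProbabilityMeasure μ] {f : X ≃ X}

lemma exists_ae_fullOrbit_subset (hf : Measurable f) (hfsymm : Measurable f.symm)
    (herg : ∀ E : Set X, MeasurableSet E → ⇑f ⁻¹' E = E → μ E = 0 ∨ μ E = 1)
    {𝒞 : Set (Set X)} (hcount : 𝒞.Countable) (hmeas : ∀ P ∈ 𝒞, MeasurableSet P)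
    (hcover : ∀ᵐ x ∂μ, ∃ P ∈ 𝒞, fullOrbit f x ⊆ P) :
    ∃ P ∈ 𝒞, ∀ᵐ x ∂μ, fullOrbit f x ⊆ P := by
  by_contra hnot
  have hnull : ∀ P ∈ 𝒞, μ (orbitCore f P) = 0 := fun P hP => by
    have hcm := measurableSet_orbitCore hf hfsymm (hmeas P hP)
    refine (herg _ hcm (preimage_orbitCore f P)).resolve_right fun h => hnot ⟨P, hP, ?_⟩
    exact (mem_ae_iff_prob_eq_one hcm).2 h
  have hcover' : ∀ᵐ x ∂μ, x ∈ ⋃ P ∈ 𝒞, orbitCore f P := by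
    filter_upwards [hcover] with x ⟨P, hP, hxP⟩
    exact mem_biUnion hP hxP
  have hU : MeasurableSet (⋃ P ∈ 𝒞, orbitCore f P) :=
    .biUnion hcount fun P hP => measurableSet_orbitCore hf hfsymm (hmeas P hP)
  have hfull : μ (⋃ P ∈ 𝒞, orbitCore f P) = 1 := (mem_ae_iff_prob_eq_one hU).1 hcover'
  rw [(measure_biUnion_null_iff hcount).2 hnull] at hfull
  exact zero_ne_one hfull

lemma exists_measure_fullOrbit_eq_one [MeasurableSingletonClass X]
    (hf : Measurable f) (hfsymm : Measurable f.symm)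
    (herg : ∀ E : Set X, MeasurableSet E → ⇑f ⁻¹' E = E → μ E = 0 ∨ μ E = 1)
    (h : IsMeasurablePartition μ {P | ∃ x : X, P = fullOrbit f x}) :
    ∃ x : X, μ (fullOrbit f x) = 1 := by
  obtain ⟨-, -, X₀, hX₀m, hX₀, Ps, hcount, hPs, hPsm, -, hinter⟩ := h
  have hae : ∀ᵐ x ∂μ, x ∈ X₀ := (mem_ae_iff_prob_eq_one hX₀m).2 hX₀
  have horbit : ∀ x ∈ X₀, fullOrbit f x = ⋂ n, partOf (Ps n) x := fun x hx => by
    rw [← partOf_fullOrbits f x, hinter x hx]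
  have hcover : ∀ n, ∀ᵐ x ∂μ, ∃ P ∈ Ps n, fullOrbit f x ⊆ P := fun n => by
    filter_upwards [hae] with x hx
    exact ⟨_, (partOf_mem (hPs n) x).1, horbit x hx ▸ iInter_subset _ n⟩
  choose P hP hPae using fun n =>
    exists_ae_fullOrbit_subset hf hfsymm herg (hcount n) (hPsm n) (hcover n)
  obtain ⟨x, hxX₀, hxP⟩ := (hae.and (ae_all_iff.2 hPae)).exists
  have hx : fullOrbit f x = ⋂ n, P n := by
    rw [horbit x hxX₀]
    exact iInter_congr fun n => partOf_eq (hPs n) (hP n) (hxP n (mem_fullOrbit_self f x))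
  refine ⟨x, (mem_ae_iff_prob_eq_one (measurableSet_fullOrbit f x)).1 ?_⟩
  filter_upwards [ae_all_iff.2 hPae] with y hy
  rw [hx]
  exact mem_iInter.2 fun n => hy n (mem_fullOrbit_self f y)

end Ergodic

theorem orbit_partition_measurable_iff_general {X : Type*} [MetricSpace X]
    [MeasurableSpace X] [BorelSpace X]
    (μ : Measure X) [IsProbabilityMeasure μ]
    (f : X ≃ X) (hf : Measurable f) (hfsymm : Measurable f.symm)
    (herg : ∀ E : Set X, MeasurableSet E → ⇑f ⁻¹' E = E → μ E = 0 ∨ μ E = 1) :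
    IsMeasurablePartition μ {P | ∃ x : X, P = fullOrbit f x} ↔
      ∃ x : X, μ (fullOrbit f x) = 1 := by
  refine ⟨exists_measure_fullOrbit_eq_one hf hfsymm herg, fun ⟨x, hx⟩ => ?_⟩
  refine isMeasurablePartition_of_measure_eq_one (isPartition_fullOrbits f) ?_ ⟨x, rfl⟩ hx
  rintro - ⟨y, rfl⟩
  exact measurableSet_fullOrbit f y

/-- for an ergodic bimeasurable bijection of a separable metric space, the
partition into full orbits is a measurable partition for `μ` iff some orbit has full
measure. -/
theorem orbit_partition_measurable_iff {X : Type*} [MetricSpace X]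
    [TopologicalSpace.SeparableSpace X] [MeasurableSpace X] [BorelSpace X]
    (μ : Measure X) [IsProbabilityMeasure μ]
    (f : X ≃ X) (hf : Measurable f) (hfsymm : Measurable f.symm)
    (herg : ∀ E : Set X, MeasurableSet E → ⇑f ⁻¹' E = E → μ E = 0 ∨ μ E = 1) :
    IsMeasurablePartition μ {P | ∃ x : X, P = fullOrbit f x} ↔
      ∃ x : X, μ (fullOrbit f x) = 1 :=
  orbit_partition_measurable_iff_general μ f hf hfsymm herg

end ErgodicDecomposition
end

section
/- Let m be the Haar (Lebesgue) probability measure on the circle S¹ = ℝ/ℤ, let α be irrational, and let f : S¹ → S¹ be the rotation f(x) = x + α (mod 1). Let ℙ = {O(x) : x ∈ S¹} be the partition of S¹ into full orbits O(x) = {x + nα (mod 1) : n ∈ ℤ}. Then there exists no disintegration of m with respect to ℙ. -/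
/-!
The rotation `x ↦ x + α` is ergodic for Haar measure `m` and maps each orbit onto itself, so for
a disintegration `{μ_P}` every function `P ↦ μ_P(E)` is invariant, hence a.e. equal to its
integral `m(E)`. Running `E` through a countable generating π-system gives `μ_{O(x)} = m` for a.e.
`x`; but orbits are countable, so `μ_{O(x)}(O(x)) = m(O(x)) = 0 ≠ 1`.
-/

open MeasureTheory Filter Set Topology

namespace ErgodicDecomposition

variable {X : Type*}

theorem partOf_mem_of_exists {ℙ : Set (Set X)} {x : X} (h : ∃ P, P ∈ ℙ ∧ x ∈ P) :
    partOf ℙ x ∈ ℙ ∧ x ∈ partOf ℙ x := by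
  rw [partOf, dif_pos h]
  exact h.choose_spec

lemma countable_generatePiSystem {S : Set (Set X)} (hS : S.Countable) :
    (generatePiSystem S).Countable := by
  refine ((countable_ofPred_finite_subset hS).image fun T => ⋂₀ T).mono fun s hs => ?_
  induction hs with
  | base hs => exact ⟨{_}, ⟨finite_singleton _, singleton_subset_iff.2 hs⟩, sInter_singleton _⟩
  | inter _ _ _ ihs iht =>
    obtain ⟨T₁, ⟨hT₁, hT₁S⟩, rfl⟩ := ihs
    obtain ⟨T₂, ⟨hT₂, hT₂S⟩, rfl⟩ := iht
    exact ⟨T₁ ∪ T₂, ⟨hT₁.union hT₂, union_subset hT₁S hT₂S⟩, sInter_union _ _⟩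

section Ergodic

variable [MeasurableSpace X] {μ : Measure X} [IsProbabilityMeasure μ] {f : X → X}
  {ℙ : Set (Set X)} {ν : Set X → Measure X}

theorem IsDisintegration.ae_apply_eq_of_ergodic (hν : IsDisintegration μ ℙ ν) (hf : Ergodic f μ)
    (hinv : ∀ x, partOf ℙ (f x) = partOf ℙ x) {E : Set X} (hE : MeasurableSet E) :
    ∀ᵐ x ∂μ, ν (partOf ℙ x) E = μ E := by
  obtain ⟨hmeas, hint⟩ := hν.2.2 E hE
  obtain ⟨c, hc⟩ := hf.ae_eq_const_of_ae_eq_comp₀ hmeas.nullMeasurable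
    (.of_forall fun x => by simp only [Function.comp_apply, hinv])
  have hμE : μ E = c := by
    rw [hint, lintegral_congr_ae hc]
    simp
  filter_upwards [hc] with x hx
  rw [hx, hμE, Function.const_apply]

theorem IsDisintegration.ae_eq_of_ergodic [MeasurableSpace.CountablyGenerated X]
    (hν : IsDisintegration μ ℙ ν) (hf : Ergodic f μ) (hinv : ∀ x, partOf ℙ (f x) = partOf ℙ x) :
    ∀ᵐ x ∂μ, ν (partOf ℙ x) = μ := by
  set C := generatePiSystem (MeasurableSpace.countableGeneratingSet X)
  have hgen : ‹MeasurableSpace X› = MeasurableSpace.generateFrom C := by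
    rw [generateFrom_generatePiSystem_eq, MeasurableSpace.generateFrom_countableGeneratingSet]
  have hC : ∀ᵐ x ∂μ, ∀ E ∈ C, ν (partOf ℙ x) E = μ E :=
    (ae_ball_iff (countable_generatePiSystem MeasurableSpace.countable_countableGeneratingSet)).2
      fun E hE => hν.ae_apply_eq_of_ergodic hf hinv (hgen ▸ .basic E hE)
  filter_upwards [hC, hν.ae_apply_eq_of_ergodic hf hinv .univ] with x hxC hx
  exact (ext_of_generate_finite C hgen (isPiSystem_generatePiSystem _)
    (fun E hE => (hxC E hE).symm) hx.symm).symm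

theorem not_isDisintegration_of_ergodic [MeasurableSpace.CountablyGenerated X] (hf : Ergodic f μ)
    (hinv : ∀ x, partOf ℙ (f x) = partOf ℙ x) (hnull : ∀ x, μ (partOf ℙ x) = 0) :
    ¬ IsDisintegration μ ℙ ν := by
  intro hν
  obtain ⟨x, hx, hx₁⟩ := ((hν.ae_eq_of_ergodic hf hinv).and hν.2.1).exists
  rw [hx, hnull] at hx₁
  exact zero_ne_one hx₁

end Ergodic

section Orbits

variable {G : Type*} [AddGroup G]

def zsmulOrbit (g x : G) : Set G := {y | ∃ n : ℤ, y = x + n • g}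

def orbitPartition (g : G) : Set (Set G) := {P | ∃ x, P = zsmulOrbit g x}

theorem mem_zsmulOrbit_self (g x : G) : x ∈ zsmulOrbit g x := ⟨0, by simp⟩

theorem zsmulOrbit_eq_of_mem {g x y : G} (h : y ∈ zsmulOrbit g x) :
    zsmulOrbit g y = zsmulOrbit g x := by
  obtain ⟨n, rfl⟩ := h
  ext z
  constructor
  · rintro ⟨m, rfl⟩
    exact ⟨n + m, by rw [add_zsmul, add_assoc]⟩
  · rintro ⟨m, rfl⟩
    exact ⟨m - n, by rw [add_assoc, ← add_zsmul, add_sub_cancel]⟩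

theorem countable_zsmulOrbit (g x : G) : (zsmulOrbit g x).Countable :=
  (countable_range fun n : ℤ => x + n • g).mono <| by
    rintro _ ⟨n, rfl⟩
    exact ⟨n, rfl⟩

theorem partOf_orbitPartition (g x : G) : partOf (orbitPartition g) x = zsmulOrbit g x := by
  obtain ⟨⟨z, hz⟩, hx⟩ :=
    partOf_mem_of_exists (ℙ := orbitPartition g) ⟨_, ⟨x, rfl⟩, mem_zsmulOrbit_self g x⟩
  rw [hz] at hx ⊢
  exact (zsmulOrbit_eq_of_mem hx).symm

theorem partOf_orbitPartition_add_self (g x : G) :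
    partOf (orbitPartition g) (x + g) = partOf (orbitPartition g) x := by
  simp only [partOf_orbitPartition]
  exact zsmulOrbit_eq_of_mem ⟨1, by rw [one_zsmul]⟩

end Orbits

-- Through `PerfectSpace`, this makes Haar measure on the circle atomless.
instance {p : ℝ} [hp : Fact (0 < p)] : Infinite (AddCircle p) :=
  have : Infinite (Ico (0 : ℝ) (0 + p)) := Ico.infinite (by simpa using hp.out)
  (AddCircle.equivIco p 0).infinite_iff.2 this

instance : IsProbabilityMeasure (volume : Measure UnitAddCircle) := ⟨UnitAddCircle.measure_univ⟩

/-- for an irrational rotation of the circle, Haar (Lebesgue) measure admits no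
disintegration with respect to the partition into full orbits `{x + nα : n ∈ ℤ}`. -/
theorem no_disintegration_orbit_partition_irrational_rotation
    (a : ℝ) (ha : Irrational a) :
    ¬ ∃ ν : Set UnitAddCircle → Measure UnitAddCircle,
        IsDisintegration (volume : Measure UnitAddCircle)
          {P | ∃ x : UnitAddCircle, P = {y | ∃ n : ℤ, y = x + n • (↑a : UnitAddCircle)}}
          ν := by
  rintro ⟨ν, hν⟩
  have hf : Ergodic (· + (a : UnitAddCircle)) volume :=
    AddCircle.ergodic_add_right.2 <| AddCircle.denseRange_zsmul_iff.1 <|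
      AddCircle.denseRange_zsmul_coe_iff.2 (by simpa using ha)
  refine not_isDisintegration_of_ergodic (ℙ := orbitPartition (a : UnitAddCircle)) hf
    (partOf_orbitPartition_add_self _) (fun x => ?_) hν
  rw [partOf_orbitPartition]
  exact (countable_zsmulOrbit _ x).measure_zero _

end ErgodicDecomposition
end
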